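/- Let X be a balancing covariate of V, i.e., T is conditionally independent of V given X. If V satisfies exchangeability (Y(t) ⊥ T | V) and additionally Y(t) is conditionally independent of X given (V, T), then X also satisfies exchangeability: Y(t) ⊥ T | X. -/

import Mathlib

/-!
Conditional independence of σ-algebras obeys the semi-graphoid rules, all of which follow from
the characterization `m₁ ⟂ m₂ | m'` iff `μ⟦s | m' ⊔ m₂⟧ = μ⟦s | m'⟧` a.e. for every `s ∈ m₁`.
Contraction of `Y ⟂ T | V` and `Y ⟂ X | (V, T)` gives `Y ⟂ (T, X) | V`; weak union and
decomposition turn this into `T ⟂ Y | (X, V)`; contraction with the balancing property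
`T ⟂ V | X` gives `T ⟂ (V, Y) | X`, and decomposition gives `Y ⟂ T | X`.
-/

open MeasureTheory ProbabilityTheory

lemma MeasurableSpace.isPiSystem_image2_inter {Ω : Type*} (m₁ m₂ : MeasurableSpace Ω) :
    IsPiSystem (Set.image2 (· ∩ ·) {s | MeasurableSet[m₁] s} {t | MeasurableSet[m₂] t}) := by
  rintro _ ⟨s₁, hs₁, t₁, ht₁, rfl⟩ _ ⟨s₂, hs₂, t₂, ht₂, rfl⟩ -
  exact ⟨s₁ ∩ s₂, hs₁.inter hs₂, t₁ ∩ t₂, ht₁.inter ht₂, Set.inter_inter_inter_comm _ _ _ _⟩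

lemma MeasurableSpace.sup_eq_generateFrom_image2_inter {Ω : Type*} (m₁ m₂ : MeasurableSpace Ω) :
    m₁ ⊔ m₂ =
      generateFrom (Set.image2 (· ∩ ·) {s | MeasurableSet[m₁] s} {t | MeasurableSet[m₂] t}) := by
  refine le_antisymm (sup_le (fun s hs ↦ ?_) (fun t ht ↦ ?_)) (generateFrom_le ?_)
  · exact measurableSet_generateFrom ⟨s, hs, Set.univ, .univ, Set.inter_univ s⟩
  · exact measurableSet_generateFrom ⟨Set.univ, .univ, t, ht, Set.univ_inter t⟩
  · rintro _ ⟨s, hs, t, ht, rfl⟩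
    exact (le_sup_left (b := m₂) s hs).inter (le_sup_right (a := m₁) t ht)

namespace MeasureTheory

theorem setIntegral_eq_of_isPiSystem {Ω E : Type*} [NormedAddCommGroup E] [NormedSpace ℝ E]
    {m mΩ : MeasurableSpace Ω} {μ : Measure Ω} (hm : m ≤ mΩ) {S : Set (Set Ω)}
    (h_eq : m = MeasurableSpace.generateFrom S) (h_inter : IsPiSystem S) {f g : Ω → E}
    (hf : Integrable f μ) (hg : Integrable g μ)
    (basic : ∀ t ∈ S, ∫ x in t, f x ∂μ = ∫ x in t, g x ∂μ)
    (h_univ : ∫ x, f x ∂μ = ∫ x, g x ∂μ) {t : Set Ω} (ht : MeasurableSet[m] t) :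
    ∫ x in t, f x ∂μ = ∫ x in t, g x ∂μ := by
  induction t, ht using MeasurableSpace.induction_on_inter h_eq h_inter with
  | empty => simp
  | basic t ht => exact basic t ht
  | compl t ht ih =>
    rw [setIntegral_compl (hm t ht) hf, setIntegral_compl (hm t ht) hg, ih, h_univ]
  | iUnion u hu_disj hu ih =>
    rw [integral_iUnion (fun i ↦ hm _ (hu i)) hu_disj hf.integrableOn,
      integral_iUnion (fun i ↦ hm _ (hu i)) hu_disj hg.integrableOn]
    exact tsum_congr ih

theorem condExp_indicator_ae_eq_mul_of_stronglyMeasurable {Ω : Type*}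
    {m mΩ : MeasurableSpace Ω} {μ : Measure Ω} [IsFiniteMeasure μ] {g : Ω → ℝ}
    (hg : StronglyMeasurable[m] g) (hg_int : Integrable g μ) {t : Set Ω} (ht : MeasurableSet t) :
    μ[t.indicator g | m] =ᵐ[μ] g * μ⟦t | m⟧ := by
  have h : t.indicator g = g * t.indicator fun _ ↦ 1 := by
    ext ω; by_cases hω : ω ∈ t <;> simp [hω]
  rw [h]
  refine condExp_mul_of_stronglyMeasurable_left hg ?_ ((integrable_const 1).indicator ht)
  rw [← h]
  exact hg_int.indicator ht

end MeasureTheory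

namespace ProbabilityTheory

variable {Ω : Type*} {m' m₁ m₂ m₃ mΩ : MeasurableSpace Ω} [StandardBorelSpace Ω]
  {hm' : m' ≤ mΩ} {μ : Measure Ω} [IsFiniteMeasure μ]

theorem CondIndep.condExp_indicator_sup_ae_eq (hm₁ : m₁ ≤ mΩ) (hm₂ : m₂ ≤ mΩ)
    (h : CondIndep m' m₁ m₂ hm' μ) {s : Set Ω} (hs : MeasurableSet[m₁] s) :
    μ⟦s | m' ⊔ m₂⟧ =ᵐ[μ] μ⟦s | m'⟧ := by
  have hsup : m' ⊔ m₂ ≤ mΩ := sup_le hm' hm₂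
  have hs_int : Integrable (s.indicator fun _ ↦ (1 : ℝ)) μ :=
    (integrable_const 1).indicator (hm₁ s hs)
  refine (ae_eq_condExp_of_forall_setIntegral_eq hsup hs_int
    (fun _ _ _ ↦ integrable_condExp.integrableOn) (fun A hA _ ↦ ?_)
    (stronglyMeasurable_condExp.mono (le_sup_left (b := m₂))).aestronglyMeasurable).symm
  refine setIntegral_eq_of_isPiSystem hsup (MeasurableSpace.sup_eq_generateFrom_image2_inter m' m₂)
    (MeasurableSpace.isPiSystem_image2_inter m' m₂) integrable_condExp hs_int ?_
    (integral_condExp hm') hA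
  rintro _ ⟨B, hB, t, ht, rfl⟩
  have ht' : MeasurableSet t := hm₂ t ht
  have hst := (condIndep_iff m' m₁ m₂ hm' hm₁ hm₂ μ).1 h s t hs ht
  calc ∫ x in B ∩ t, (μ⟦s | m'⟧) x ∂μ
      = ∫ x in B, (μ[t.indicator (μ⟦s | m'⟧) | m']) x ∂μ := by
        rw [setIntegral_condExp hm' (integrable_condExp.indicator ht') hB,
          setIntegral_indicator ht']
    _ = ∫ x in B, (μ⟦s ∩ t | m'⟧) x ∂μ := setIntegral_congr_ae (hm' B hB) <| by
        filter_upwards [condExp_indicator_ae_eq_mul_of_stronglyMeasurable (m := m') (μ := μ)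
          stronglyMeasurable_condExp integrable_condExp ht', hst] with x h₁ h₂ _
        rw [h₁, h₂]
    _ = ∫ x in B ∩ t, s.indicator (fun _ ↦ (1 : ℝ)) x ∂μ := by
        rw [setIntegral_condExp hm' ((integrable_const 1).indicator ((hm₁ s hs).inter ht')) hB,
          ← setIntegral_indicator ht', Set.indicator_indicator, Set.inter_comm]

theorem condIndep_of_condExp_indicator_sup_ae_eq (hm₁ : m₁ ≤ mΩ) (hm₂ : m₂ ≤ mΩ)
    (h : ∀ s, MeasurableSet[m₁] s → μ⟦s | m' ⊔ m₂⟧ =ᵐ[μ] μ⟦s | m'⟧) :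
    CondIndep m' m₁ m₂ hm' μ := by
  have hsup : m' ⊔ m₂ ≤ mΩ := sup_le hm' hm₂
  refine (condIndep_iff m' m₁ m₂ hm' hm₁ hm₂ μ).2 fun s t hs ht ↦ ?_
  have ht' : MeasurableSet t := hm₂ t ht
  have hs_int : Integrable (s.indicator fun _ ↦ (1 : ℝ)) μ :=
    (integrable_const 1).indicator (hm₁ s hs)
  calc μ⟦s ∩ t | m'⟧
      =ᵐ[μ] μ[(μ[t.indicator (s.indicator fun _ ↦ (1 : ℝ)) | m' ⊔ m₂]) | m'] := by
        rw [Set.indicator_indicator, Set.inter_comm]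
        exact (condExp_condExp_of_le le_sup_left hsup).symm
    _ =ᵐ[μ] μ[t.indicator (μ⟦s | m' ⊔ m₂⟧) | m'] :=
        condExp_congr_ae (condExp_indicator hs_int (le_sup_right (a := m') t ht))
    _ =ᵐ[μ] μ[t.indicator (μ⟦s | m'⟧) | m'] := condExp_congr_ae (h s hs).indicator
    _ =ᵐ[μ] μ⟦s | m'⟧ * μ⟦t | m'⟧ :=
        condExp_indicator_ae_eq_mul_of_stronglyMeasurable stronglyMeasurable_condExp
          integrable_condExp ht'

theorem CondIndep.sup_right (hm₁ : m₁ ≤ mΩ) (hm₂ : m₂ ≤ mΩ) (hm₃ : m₃ ≤ mΩ)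
    (h₁₂ : CondIndep m' m₁ m₂ hm' μ) (h₁₃ : CondIndep (m' ⊔ m₂) m₁ m₃ (sup_le hm' hm₂) μ) :
    CondIndep m' m₁ (m₂ ⊔ m₃) hm' μ := by
  refine condIndep_of_condExp_indicator_sup_ae_eq hm₁ (sup_le hm₂ hm₃) fun s hs ↦ ?_
  rw [← sup_assoc]
  exact (h₁₃.condExp_indicator_sup_ae_eq hm₁ hm₃ hs).trans
    (h₁₂.condExp_indicator_sup_ae_eq hm₁ hm₂ hs)

theorem CondIndep.cond_sup_of_le_right (hm₁ : m₁ ≤ mΩ) (hm₂ : m₂ ≤ mΩ)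
    (h : CondIndep m' m₁ m₂ hm' μ) (h₃₂ : m₃ ≤ m₂) :
    CondIndep (m' ⊔ m₃) m₁ m₂ (sup_le hm' (h₃₂.trans hm₂)) μ := by
  refine condIndep_of_condExp_indicator_sup_ae_eq hm₁ hm₂ fun s hs ↦ ?_
  rw [sup_assoc, sup_eq_right.2 h₃₂]
  exact (h.condExp_indicator_sup_ae_eq hm₁ hm₂ hs).trans
    ((condIndep_of_condIndep_of_le_right h h₃₂).condExp_indicator_sup_ae_eq hm₁
      (h₃₂.trans hm₂) hs).symm

theorem condIndep_of_balancing {mT mV mX mY : MeasurableSpace Ω} (hmT : mT ≤ mΩ)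
    (hmV : mV ≤ mΩ) (hmX : mX ≤ mΩ) (hmY : mY ≤ mΩ) (hbal : CondIndep mX mT mV hmX μ)
    (hexch : CondIndep mV mY mT hmV μ) (hYX : CondIndep (mV ⊔ mT) mY mX (sup_le hmV hmT) μ) :
    CondIndep mX mY mT hmX μ := by
  have hY_TX : CondIndep mV mY (mT ⊔ mX) hmV μ := hexch.sup_right hmY hmT hmX hYX
  have hY_T_VX : CondIndep (mV ⊔ mX) mY mT (sup_le hmV hmX) μ :=
    condIndep_of_condIndep_of_le_right
      (hY_TX.cond_sup_of_le_right hmY (sup_le hmT hmX) le_sup_right) le_sup_left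
  have hT_Y_XV : CondIndep (mX ⊔ mV) mT mY (sup_le hmX hmV) μ := by
    convert hY_T_VX.symm using 1
    exact sup_comm _ _
  exact (condIndep_of_condIndep_of_le_right (hbal.sup_right hmT hmV hmY hT_Y_XV)
    le_sup_right).symm

end ProbabilityTheory

/-- **Balancing covariates preserve exchangeability.** Let `X` be a balancing covariate
of `V`, i.e. `T ⟂ V | X`. If `V` satisfies exchangeability (`Y t ⟂ T | V`) and
additionally `Y t ⟂ X | (V, T)`, then `X` also satisfies exchangeability: `Y t ⟂ T | X`. -/
theorem exchangeability_of_balancing_covariate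
    {Ω 𝒱 𝒳 𝒴 : Type*}
    [MeasurableSpace Ω] [StandardBorelSpace Ω]
    [MeasurableSpace 𝒱] [MeasurableSpace 𝒳] [MeasurableSpace 𝒴]
    (μ : Measure Ω) [IsProbabilityMeasure μ]
    (T : Ω → Bool) (hT : Measurable T)
    (V : Ω → 𝒱) (hV : Measurable V)
    (X : Ω → 𝒳) (hX : Measurable X)
    (Y : Bool → Ω → 𝒴) (hY : ∀ t, Measurable (Y t))
    -- `X` is a balancing covariate of `V`: `T ⟂ V | X`
    (hbal : CondIndepFun (MeasurableSpace.comap X inferInstance) hX.comap_le T V μ)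
    -- exchangeability given `V`: `Y t ⟂ T | V`
    (hexch : ∀ t, CondIndepFun (MeasurableSpace.comap V inferInstance)
        hV.comap_le (Y t) T μ)
    -- `Y t ⟂ X | (V, T)`
    (hYX : ∀ t, CondIndepFun
        (MeasurableSpace.comap (fun ω => (V ω, T ω)) inferInstance)
        ((hV.prodMk hT).comap_le) (Y t) X μ) :
    -- conclusion: exchangeability given `X`: `Y t ⟂ T | X`
    ∀ t, CondIndepFun (MeasurableSpace.comap X inferInstance) hX.comap_le (Y t) T μ := by
  intro t
  rw [condIndepFun_iff_condIndep]
  refine condIndep_of_balancing hT.comap_le hV.comap_le hX.comap_le (hY t).comap_le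
    ((condIndepFun_iff_condIndep ..).1 hbal) ((condIndepFun_iff_condIndep ..).1 (hexch t)) ?_
  convert (condIndepFun_iff_condIndep ..).1 (hYX t) using 1
  exact (MeasurableSpace.comap_prodMk V T).symm
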